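/- Any matching M' in the constructed bipartite graph G induces a feasible solution of P1 with the same total weight: defining x_{i0} = 1 if {i, r_i} ∈ M', and x_{ij} = 1 if {i, (j,k)} ∈ M' for some 1 ≤ k ≤ b_j, yields x satisfying the per-user and capacity constraints of P1, and ∑ x_{ij} u_{ij} equals the total weight of the edges of M' incident to user vertices. -/
import Mathlib

def P1Feasible (M N : ℕ) (b : Fin N → ℕ) (x : Fin M → Fin (N + 1) → ℕ) : Prop :=
  (∀ i j, x i j ≤ 1) ∧ (∀ i, ∑ j, x i j ≤ 1) ∧ (∀ j : Fin N, ∑ i, x i j.succ ≤ b j)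

noncomputable def P1Obj (M N : ℕ) (u : Fin M → Fin (N + 1) → ℝ)
    (x : Fin M → Fin (N + 1) → ℕ) : ℝ :=
  ∑ i, ∑ j, (x i j : ℝ) * u i j

/-- A matching in the bipartite graph `G`, described by what each user vertex is
matched to: `none` (unmatched), `some (Sum.inl ())` (its own receiver `r_i`),
or `some (Sum.inr ⟨j,k⟩)` (copy `k` of base station `j`). Since receivers
`r_i` are distinct, the matching condition is that distinct users never use the
same BS copy. -/
def IsMatching (M N : ℕ) (b : Fin N → ℕ)
    (m : Fin M → Option (Unit ⊕ Σ j : Fin N, Fin (b j))) : Prop :=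
  ∀ i i' (v : Σ j : Fin N, Fin (b j)),
    m i = some (Sum.inr v) → m i' = some (Sum.inr v) → i = i'

/-- Total weight of the edges of the matching incident to user vertices. -/
noncomputable def MatchingWeight (M N : ℕ) (b : Fin N → ℕ)
    (u : Fin M → Fin (N + 1) → ℝ)
    (m : Fin M → Option (Unit ⊕ Σ j : Fin N, Fin (b j))) : ℝ :=
  ∑ i, (match m i with
        | none => 0
        | some (Sum.inl _) => u i 0
        | some (Sum.inr ⟨j, _⟩) => u i j.succ)

/-- The P1 assignment induced by a matching: `x_{i0} = 1` iff `{i,r_i}` is in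
the matching and `x_{i,j.succ} = 1` iff `{i,(j,k)}` is in the matching for
some copy `k`. -/
def matchingToAssignment (M N : ℕ) (b : Fin N → ℕ)
    (m : Fin M → Option (Unit ⊕ Σ j : Fin N, Fin (b j))) :
    Fin M → Fin (N + 1) → ℕ :=
  fun i j =>
    Fin.cases (if m i = some (Sum.inl ()) then 1 else 0)
      (fun j' => if ∃ k : Fin (b j'), m i = some (Sum.inr ⟨j', k⟩) then 1 else 0) j

/-- any matching in `G` induces a feasible solution of P1 whose
objective equals the matching weight. -/
theorem matching_induces_feasible_assignment (M N : ℕ) (b : Fin N → ℕ)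
    (u : Fin M → Fin (N + 1) → ℝ)
    (m : Fin M → Option (Unit ⊕ Σ j : Fin N, Fin (b j)))
    (hm : IsMatching M N b m) :
    P1Feasible M N b (matchingToAssignment M N b m) ∧
    P1Obj M N u (matchingToAssignment M N b m) = MatchingWeight M N b u m := by
  classical
  have key : ∀ i (j : Fin N) (k : Fin (b j)), m i = some (Sum.inr ⟨j, k⟩) →
      ∀ j' : Fin N, (∃ k' : Fin (b j'), m i = some (Sum.inr ⟨j', k'⟩)) ↔ j' = j := by
    intro i j k h j'
    constructor
    · rintro ⟨k', hk⟩
      rw [h] at hk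
      obtain ⟨h1, -⟩ := Sigma.mk.inj_iff.mp (Sum.inr.inj (Option.some.inj hk))
      exact h1.symm
    · rintro rfl; exact ⟨k, h⟩
  constructor
  · refine ⟨?_, ?_, ?_⟩
    · intro i j
      induction j using Fin.cases with
      | zero => simp only [matchingToAssignment, Fin.cases_zero]; split <;> simp
      | succ j' => simp only [matchingToAssignment, Fin.cases_succ]; split <;> simp
    · intro i
      rw [Fin.sum_univ_succ]
      simp only [matchingToAssignment, Fin.cases_zero, Fin.cases_succ]
      rcases h : m i with _ | (_ | ⟨j, k⟩)
      · simp [h]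
      · simp [h]
      · rw [if_neg (by simp [h]), Finset.sum_eq_single j]
        · simp [h]
        · intro x _ hx
          rw [if_neg]
          rintro ⟨k', hk⟩
          obtain ⟨h1, -⟩ := Sigma.mk.inj_iff.mp (Sum.inr.inj (Option.some.inj hk))
          exact hx h1.symm
        · simp
    · intro j
      simp only [matchingToAssignment, Fin.cases_succ]
      rw [Finset.sum_boole]
      rcases Nat.eq_zero_or_pos (b j) with h0 | h0
      · have : ∀ i : Fin M, ¬ ∃ k : Fin (b j), m i = some (Sum.inr ⟨j, k⟩) := by
          rintro i ⟨k, -⟩; exact absurd k.2 (by omega)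
        simp only [this, if_neg, ite_false]
        simp
      · have : Nonempty (Fin (b j)) := ⟨⟨0, h0⟩⟩
        have hcard := Finset.card_le_card_of_injOn
          (f := fun i : Fin M =>
            if h : ∃ k : Fin (b j), m i = some (Sum.inr ⟨j, k⟩) then h.choose
            else Classical.arbitrary _)
          (s := Finset.univ.filter fun i => ∃ k : Fin (b j), m i = some (Sum.inr ⟨j, k⟩))
          (t := (Finset.univ : Finset (Fin (b j))))
          (fun i _ => Finset.mem_univ _)
          (by
            intro i hi i' hi' heq
            simp only [Finset.mem_coe, Finset.mem_filter] at hi hi'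
            dsimp only at heq
            rw [dif_pos hi.2, dif_pos hi'.2] at heq
            exact hm i i' ⟨j, hi.2.choose⟩ hi.2.choose_spec (heq ▸ hi'.2.choose_spec))
        simpa using hcard
  · unfold P1Obj MatchingWeight
    refine Finset.sum_congr rfl fun i _ => ?_
    rw [Fin.sum_univ_succ]
    simp only [matchingToAssignment, Fin.cases_zero, Fin.cases_succ]
    rcases h : m i with _ | (_ | ⟨j, k⟩)
    · simp [h]
    · simp [h]
    · rw [if_neg (by simp [h])]
      rw [Finset.sum_eq_single j]
      · simp [h]
      · intro x _ hx
        rw [if_neg, Nat.cast_zero, zero_mul]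
        rintro ⟨k', hk⟩
        obtain ⟨h1, -⟩ := Sigma.mk.inj_iff.mp (Sum.inr.inj (Option.some.inj hk))
        exact hx h1.symm
      · simp
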